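/- Let C₀ > 0 and let M be a positive integer. There exists a constant C > 0 such that for all real a, x, T > 0 with T ≤ x/3, every (a,x,T,C₀,M)-admissible test function φ, and every r with 1 ≤ r ≤ a/(8x), one has |φ̌(r)| ≤ C·r^{−3/2}·e^{−r/2}. -/

import Mathlib

open Real

/-- The modified Bessel function of imaginary order:
`K_{iν}(x) = ∫_0^∞ exp(−x cosh t) cos(νt) dt`. -/
noncomputable def KBessel (ν x : ℝ) : ℝ :=
  ∫ t in Set.Ioi (0:ℝ), Real.exp (-x * Real.cosh t) * Real.cos (ν * t)

/-- `f` is piecewise monotone on at most `M` subintervals of `[0,∞)`: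
there are points `0 = a 0 ≤ a 1 ≤ … ≤ a (M−1)` such that `f` is monotone or antitone
on each `[a i, a (i+1)]` for `i + 1 < M`, and on the final ray `[a (M−1), ∞)`. -/
def PiecewiseMono (f : ℝ → ℝ) (M : ℕ) : Prop :=
  ∃ a : ℕ → ℝ, a 0 = 0 ∧ Monotone a ∧
    (∀ i : ℕ, i + 1 < M →
      MonotoneOn f (Set.Icc (a i) (a (i + 1))) ∨
        AntitoneOn f (Set.Icc (a i) (a (i + 1)))) ∧
    (MonotoneOn f (Set.Ici (a (M - 1))) ∨ AntitoneOn f (Set.Ici (a (M - 1))))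

/-- An `(a,x,T,C₀,M)`-admissible test function. -/
def IsAdmissible (a x T C₀ : ℝ) (M : ℕ) (φ : ℝ → ℝ) : Prop :=
  ContDiff ℝ (⊤ : ℕ∞) φ ∧
  (∀ t : ℝ, 0 ≤ φ t ∧ φ t ≤ 1) ∧
  (∀ t : ℝ, a / (2 * x) ≤ t → t ≤ a / x → φ t = 1) ∧
  (∀ t : ℝ, t ≤ a / (2 * x + 2 * T) → φ t = 0) ∧
  (∀ t : ℝ, a / (x - T) ≤ t → φ t = 0) ∧
  (∀ t : ℝ, 0 ≤ t → |deriv φ t| ≤ C₀ * x ^ 2 / (a * T)) ∧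
  PiecewiseMono φ M ∧ PiecewiseMono (deriv φ) M

/-- The `K`-Bessel transform `φ̌(r) = cosh(πr) ∫_0^∞ K_{2ir}(u) φ(u) du/u`. -/
noncomputable def phiCheck (φ : ℝ → ℝ) (r : ℝ) : ℝ :=
  Real.cosh (Real.pi * r) * ∫ u in Set.Ioi (0:ℝ), KBessel (2 * r) u * φ u / u


open Complex MeasureTheory Filter Set Topology

noncomputable def Ff (u r : ℝ) (z : ℂ) : ℂ :=
  Complex.exp (-(u:ℂ) * Complex.cosh z + 2*(r:ℂ)*z*Complex.I)

lemma coshC_re (z : ℂ) : (Complex.cosh z).re = Real.cosh z.re * Real.cos z.im := by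
  rw [Complex.cosh, Real.cosh_eq]
  simp [Complex.exp_re, Complex.add_re, Complex.div_re, Complex.normSq]
  ring

lemma norm_Ff (u r : ℝ) (z : ℂ) :
    ‖Ff u r z‖ = Real.exp (-(u * (Real.cosh z.re * Real.cos z.im)) - 2*r*z.im) := by
  rw [Ff, Complex.norm_exp]
  congr 1
  simp [Complex.add_re, Complex.mul_I_re, Complex.neg_re, coshC_re, Complex.mul_im,
    Complex.ofReal_re, Complex.ofReal_im]
  ring

lemma cosh_lb (x : ℝ) : 1 + x^2/2 ≤ Real.cosh x := by
  have h1 : Real.cosh x = 1 + 2 * Real.sinh (x/2)^2 := by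
    have := Real.cosh_two_mul (x/2)
    have h2 := Real.cosh_sq (x/2)
    rw [show 2*(x/2) = x by ring] at this
    rw [this, h2]; ring
  have h3 : (x/2)^2 ≤ Real.sinh (x/2)^2 := by
    have h4 : |x/2| ≤ Real.sinh |x/2| := Real.self_le_sinh_iff.2 (abs_nonneg _)
    calc (x/2)^2 = |x/2|^2 := (_root_.sq_abs _).symm
    _ ≤ Real.sinh |x/2|^2 := by
        apply pow_le_pow_left₀ (abs_nonneg _) h4
    _ = Real.sinh (x/2)^2 := by
        rcases le_or_gt 0 (x/2) with h|h
        · rw [_root_.abs_of_nonneg h]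
        · rw [_root_.abs_of_neg h, Real.sinh_neg]; ring
  nlinarith

lemma cos34_pos : (0:ℝ) < Real.cos (3/4) := by
  have := Real.one_sub_sq_div_two_le_cos (x := 3/4); nlinarith

lemma cos34_lb : (23/32:ℝ) ≤ Real.cos (3/4) := by
  have := Real.one_sub_sq_div_two_le_cos (x := 3/4); nlinarith

lemma Ff_norm_le (u r x y : ℝ) (hu : 0 < u) (hr : 0 ≤ r) (hy0 : 0 ≤ y) (hy : y ≤ 3/4) :
    ‖Ff u r ((x:ℂ) + y*Complex.I)‖ ≤ Real.exp (-(u * Real.cos (3/4) * Real.cosh x)) := by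
  rw [norm_Ff]
  simp only [Complex.add_re, Complex.ofReal_re, Complex.mul_I_re, Complex.ofReal_im,
    Complex.add_im, Complex.mul_I_im, Complex.ofReal_re]
  have hre : ((x:ℂ) + (y:ℝ)*Complex.I).re = x := by simp
  have him : ((x:ℂ) + (y:ℝ)*Complex.I).im = y := by simp
  rw [Real.exp_le_exp]
  have hcos : Real.cos (3/4) ≤ Real.cos y := by
    apply Real.cos_le_cos_of_nonneg_of_le_pi hy0 (by linarith [Real.pi_gt_three]) hy
  have hch : (1:ℝ) ≤ Real.cosh x := Real.one_le_cosh x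
  have hry : 0 ≤ 2*r*y := by positivity
  have key : u * Real.cosh x * Real.cos (3/4) ≤ u * Real.cosh x * Real.cos y :=
    mul_le_mul_of_nonneg_left hcos (by have := Real.cosh_pos (x:=x); positivity)
  simp only [neg_zero, add_zero, zero_add]
  nlinarith [key]

lemma Ff_norm_le_gauss (u r x y : ℝ) (hu : 0 < u) (hr : 0 ≤ r) (hy0 : 0 ≤ y) (hy : y ≤ 3/4) :
    ‖Ff u r ((x:ℂ) + y*Complex.I)‖ ≤ Real.exp (-(u * Real.cos (3/4) / 2) * x^2) := by
  refine (Ff_norm_le u r x y hu hr hy0 hy).trans ?_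
  rw [Real.exp_le_exp]
  have h1 : x^2/2 ≤ Real.cosh x := by nlinarith [cosh_lb x]
  have h2 : u * Real.cos (3/4) * (x^2/2) ≤ u * Real.cos (3/4) * Real.cosh x :=
    mul_le_mul_of_nonneg_left h1 (by have := cos34_pos; positivity)
  nlinarith [h2]

lemma cont_Ff (u r y : ℝ) : Continuous (fun x : ℝ => Ff u r ((x:ℂ) + y*Complex.I)) := by
  unfold Ff
  fun_prop

lemma integrable_Ff (u r y : ℝ) (hu : 0 < u) (hr : 0 ≤ r) (hy0 : 0 ≤ y) (hy : y ≤ 3/4) :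
    Integrable (fun x : ℝ => Ff u r ((x:ℂ) + y*Complex.I)) := by
  refine Integrable.mono' (g := fun x => Real.exp (-(u * Real.cos (3/4) / 2) * x^2))
    (integrable_exp_neg_mul_sq (by have := cos34_pos; positivity)) ((cont_Ff u r y).aestronglyMeasurable)
    (ae_of_all _ fun x => Ff_norm_le_gauss u r x y hu hr hy0 hy)

lemma diff_Ff (u r : ℝ) : Differentiable ℂ (Ff u r) := by
  apply Differentiable.cexp
  apply Differentiable.add
  · exact (differentiable_const _).mul Complex.differentiable_cosh
  · exact (((differentiable_const _).mul differentiable_id).mul (differentiable_const _))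

lemma vert_tendsto (u r : ℝ) (hu : 0 < u) (hr : 0 ≤ r) (s : ℝ → ℝ)
    (hs : ∀ T, |s T| = T ∨ True) (hsign : ∀ T, s T = T ∨ s T = -T) :
    Tendsto (fun T : ℝ => ∫ y in (0:ℝ)..(3/4), Ff u r ((s T : ℂ) + y*Complex.I)) atTop (𝓝 0) := by
  rw [tendsto_zero_iff_norm_tendsto_zero]
  have hb : ∀ T : ℝ, ‖∫ y in (0:ℝ)..(3/4), Ff u r ((s T : ℂ) + y*Complex.I)‖
      ≤ Real.exp (-(u * Real.cos (3/4) * T)) * (3/4) := by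
    intro T
    have h1 : ∀ y ∈ Set.uIoc (0:ℝ) (3/4), ‖Ff u r ((s T : ℂ) + y*Complex.I)‖
        ≤ Real.exp (-(u * Real.cos (3/4) * T)) := by
      intro y hy
      rw [Set.uIoc_of_le (by norm_num)] at hy
      refine (Ff_norm_le u r (s T) y hu hr hy.1.le hy.2).trans ?_
      rw [Real.exp_le_exp]
      have hcosh : T ≤ Real.cosh (s T) := by
        rcases hsign T with h|h <;> rw [h]
        · nlinarith [cosh_lb T, sq_nonneg (T-1)]
        · rw [Real.cosh_neg]; nlinarith [cosh_lb T, sq_nonneg (T-1)]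
      nlinarith [mul_le_mul_of_nonneg_left hcosh (by have := cos34_pos; positivity : (0:ℝ) ≤ u * Real.cos (3/4))]
    have h2 := intervalIntegral.norm_integral_le_of_norm_le_const h1
    have h3 : |(3:ℝ)/4 - 0| = 3/4 := by norm_num
    rwa [h3] at h2
  refine squeeze_zero (fun T => norm_nonneg _) hb ?_
  have h2 : Tendsto (fun T : ℝ => u * Real.cos (3/4) * T) atTop atTop := by
    apply Tendsto.const_mul_atTop (by have := cos34_pos; positivity) tendsto_id
  have h3 : Tendsto (fun T : ℝ => Real.exp (-(u * Real.cos (3/4) * T))) atTop (𝓝 0) := by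
    exact Real.tendsto_exp_neg_atTop_nhds_zero.comp h2
  simpa using h3.mul_const (3/4)

lemma contour (u r : ℝ) (hu : 0 < u) (hr : 0 ≤ r) :
    (∫ x : ℝ, Ff u r x) = ∫ x : ℝ, Ff u r ((x:ℂ) + (3/4:ℝ)*Complex.I) := by
  have key : ∀ T : ℝ,
      (∫ x in -T..T, Ff u r (x:ℂ)) - (∫ x in -T..T, Ff u r ((x:ℂ) + (3/4:ℝ)*Complex.I))
      + Complex.I • (∫ y in (0:ℝ)..(3/4), Ff u r ((T:ℂ) + y*Complex.I))
      - Complex.I • (∫ y in (0:ℝ)..(3/4), Ff u r ((-T:ℂ) + y*Complex.I)) = 0 := by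
    intro T
    have := Complex.integral_boundary_rect_eq_zero_of_differentiableOn (Ff u r)
      (-T) ((T:ℂ) + (3/4:ℝ)*Complex.I) ((diff_Ff u r).differentiableOn)
    simpa only [neg_im, Complex.ofReal_im, neg_zero, Complex.ofReal_zero, zero_mul, add_zero,
      neg_re, Complex.ofReal_re, Complex.add_re, Complex.mul_re, Complex.I_re, mul_zero,
      Complex.I_im, Complex.add_im, Complex.mul_im, mul_one, zero_add, tsub_zero,
      Complex.ofReal_neg, sub_zero] using this
  have t1 : Tendsto (fun T : ℝ => ∫ x in -T..T, Ff u r (x:ℂ)) atTop (𝓝 (∫ x : ℝ, Ff u r (x:ℂ))) := by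
    apply intervalIntegral_tendsto_integral _ tendsto_neg_atTop_atBot tendsto_id
    have := integrable_Ff u r 0 hu hr le_rfl (by norm_num)
    simpa using this
  have t2 : Tendsto (fun T : ℝ => ∫ x in -T..T, Ff u r ((x:ℂ) + (3/4:ℝ)*Complex.I)) atTop
      (𝓝 (∫ x : ℝ, Ff u r ((x:ℂ) + (3/4:ℝ)*Complex.I))) :=
    intervalIntegral_tendsto_integral (integrable_Ff u r (3/4) hu hr (by norm_num) le_rfl)
      tendsto_neg_atTop_atBot tendsto_id
  have t3 : Tendsto (fun T : ℝ => ∫ y in (0:ℝ)..(3/4), Ff u r ((T:ℂ) + y*Complex.I)) atTop (𝓝 0) :=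
    vert_tendsto u r hu hr id (fun T => Or.inr trivial) (fun T => Or.inl rfl)
  have t4 : Tendsto (fun T : ℝ => ∫ y in (0:ℝ)..(3/4), Ff u r ((-T:ℂ) + y*Complex.I)) atTop (𝓝 0) := by
    have := vert_tendsto u r hu hr (fun T => -T) (fun T => Or.inr trivial) (fun T => Or.inr rfl)
    simpa using this
  have comb : Tendsto (fun T : ℝ =>
      (∫ x in -T..T, Ff u r (x:ℂ)) - (∫ x in -T..T, Ff u r ((x:ℂ) + (3/4:ℝ)*Complex.I))
      + Complex.I • (∫ y in (0:ℝ)..(3/4), Ff u r ((T:ℂ) + y*Complex.I))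
      - Complex.I • (∫ y in (0:ℝ)..(3/4), Ff u r ((-T:ℂ) + y*Complex.I))) atTop
      (𝓝 ((∫ x : ℝ, Ff u r (x:ℂ)) - (∫ x : ℝ, Ff u r ((x:ℂ) + (3/4:ℝ)*Complex.I)) + Complex.I • (0:ℂ) - Complex.I • (0:ℂ))) := by
    exact (((t1.sub t2).add (t3.const_smul _)).sub (t4.const_smul _))
  have := tendsto_nhds_unique comb (by simpa using tendsto_const_nhds.congr (fun T => (key T).symm))
  simp only [smul_zero, add_zero, sub_zero] at this
  exact sub_eq_zero.mp this

lemma integrable_Ff0 (u r : ℝ) (hu : 0 < u) (hr : 0 ≤ r) :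
    Integrable (fun x : ℝ => Ff u r (x:ℂ)) := by
  have := integrable_Ff u r 0 hu hr le_rfl (by norm_num)
  simpa using this

lemma Ff_re (u r t : ℝ) :
    (Ff u r (t:ℂ)).re = Real.exp (-u * Real.cosh t) * Real.cos (2*r*t) := by
  rw [Ff]
  have h : (-(u:ℂ) * Complex.cosh (t:ℂ) + 2*(r:ℂ)*(t:ℂ)*Complex.I)
      = Complex.ofReal (-u * Real.cosh t) + Complex.ofReal (2*r*t) * Complex.I := by
    push_cast [← Complex.ofReal_cosh]
    ring
  rw [h, Complex.exp_re]
  simp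

lemma Ff_neg (u r t : ℝ) : Ff u r ((-t : ℝ):ℂ) = starRingEnd ℂ (Ff u r (t:ℂ)) := by
  rw [Ff, Ff, ← Complex.exp_conj]
  congr 1
  have h1 : Complex.cosh ((-t:ℝ):ℂ) = Complex.cosh (t:ℂ) := by
    push_cast; rw [Complex.cosh_neg]
  rw [h1, ← Complex.ofReal_cosh]
  simp only [map_add, map_mul, map_neg, Complex.conj_I, Complex.conj_ofReal, map_ofNat]
  push_cast
  ring

lemma kbessel_re (u r : ℝ) (hu : 0 < u) (hr : 0 ≤ r) :
    KBessel (2*r) u = (∫ x in Set.Ioi (0:ℝ), Ff u r (x:ℂ)).re := by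
  have h := integral_re (μ := volume.restrict (Set.Ioi (0:ℝ))) (𝕜 := ℂ)
    ((integrable_Ff0 u r hu hr).integrableOn)
  simp only [RCLike.re_to_complex] at h
  rw [KBessel, ← h]
  apply setIntegral_congr_fun measurableSet_Ioi
  intro t _
  exact (Ff_re u r t).symm

lemma full_eq_two_re (u r : ℝ) (hu : 0 < u) (hr : 0 ≤ r) :
    (∫ x : ℝ, Ff u r (x:ℂ)) =
      ((2 * (∫ x in Set.Ioi (0:ℝ), Ff u r (x:ℂ)).re : ℝ) : ℂ) := by
  have hint := integrable_Ff0 u r hu hr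
  have hsplit : (∫ x : ℝ, Ff u r (x:ℂ))
      = (∫ x in Set.Iic (0:ℝ), Ff u r (x:ℂ)) + ∫ x in Set.Ioi (0:ℝ), Ff u r (x:ℂ) :=
    (intervalIntegral.integral_Iic_add_Ioi hint.integrableOn hint.integrableOn).symm
  have hneg : (∫ x in Set.Iic (0:ℝ), Ff u r (x:ℂ))
      = starRingEnd ℂ (∫ x in Set.Ioi (0:ℝ), Ff u r (x:ℂ)) := by
    have h1 : (∫ x in Set.Iic (0:ℝ), Ff u r (x:ℂ))
        = ∫ x in Set.Ioi (0:ℝ), Ff u r ((-x : ℝ):ℂ) := by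
      have := integral_comp_neg_Iic (0:ℝ) (fun x : ℝ => Ff u r ((-x : ℝ):ℂ))
      simp only [neg_neg, neg_zero] at this
      exact this
    rw [h1]
    simp_rw [Ff_neg]
    exact integral_conj
  rw [hsplit, hneg]
  set A := ∫ x in Set.Ioi (0:ℝ), Ff u r (x:ℂ)
  rw [add_comm, Complex.add_conj]

lemma kbessel_le (u r : ℝ) (hu : 0 < u) (hr : 0 ≤ r) :
    |KBessel (2*r) u| ≤ (1/2) * Real.exp (-(3*r/2)) * Real.exp (-(u * Real.cos (3/4)))
      * Real.sqrt (2*Real.pi/(u * Real.cos (3/4))) := by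
  set c := Real.cos (3/4) with hc
  have hcpos := cos34_pos
  have h1 : (2:ℝ) * |KBessel (2*r) u| = ‖∫ x : ℝ, Ff u r (x:ℂ)‖ := by
    rw [full_eq_two_re u r hu hr, Complex.norm_real, kbessel_re u r hu hr]
    rw [Real.norm_eq_abs, abs_mul]
    norm_num
  have h2 : ‖∫ x : ℝ, Ff u r (x:ℂ)‖
      ≤ Real.exp (-(3*r/2) - u*c) * Real.sqrt (Real.pi/(u*c/2)) := by
    rw [contour u r hu hr]
    refine (norm_integral_le_integral_norm _).trans ?_
    have hle : ∀ x : ℝ, ‖Ff u r ((x:ℂ) + (3/4:ℝ)*Complex.I)‖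
        ≤ Real.exp (-(3*r/2) - u*c) * Real.exp (-(u*c/2) * x^2) := by
      intro x
      rw [norm_Ff]
      have hre : ((x:ℂ) + ((3/4:ℝ):ℂ)*Complex.I).re = x := by simp
      have him : ((x:ℂ) + ((3/4:ℝ):ℂ)*Complex.I).im = 3/4 := by simp
      rw [hre, him, ← Real.exp_add, Real.exp_le_exp]
      have := cosh_lb x
      nlinarith [mul_le_mul_of_nonneg_left (show (1:ℝ) + x^2/2 ≤ Real.cosh x from cosh_lb x)
        (by positivity : (0:ℝ) ≤ u * c)]
    have hint1 : Integrable (fun x : ℝ => ‖Ff u r ((x:ℂ) + (3/4:ℝ)*Complex.I)‖) :=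
      (integrable_Ff u r (3/4) hu hr (by norm_num) le_rfl).norm
    have hint2 : Integrable (fun x : ℝ =>
        Real.exp (-(3*r/2) - u*c) * Real.exp (-(u*c/2) * x^2)) :=
      (integrable_exp_neg_mul_sq (by positivity)).const_mul _
    calc ∫ x : ℝ, ‖Ff u r ((x:ℂ) + (3/4:ℝ)*Complex.I)‖
        ≤ ∫ x : ℝ, Real.exp (-(3*r/2) - u*c) * Real.exp (-(u*c/2) * x^2) :=
          integral_mono hint1 hint2 hle
      _ = Real.exp (-(3*r/2) - u*c) * Real.sqrt (Real.pi/(u*c/2)) := by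
          rw [MeasureTheory.integral_const_mul, integral_gaussian]
  have h3 : Real.sqrt (Real.pi/(u*c/2)) = Real.sqrt (2*Real.pi/(u*c)) := by
    congr 1; field_simp
  rw [h3] at h2
  rw [Real.exp_sub] at h2
  calc |KBessel (2*r) u| = (1/2) * (2 * |KBessel (2*r) u|) := by ring
  _ = (1/2) * ‖∫ x : ℝ, Ff u r (x:ℂ)‖ := by rw [h1]
  _ ≤ (1/2) * (Real.exp (-(3*r/2)) / Real.exp (u*c) * Real.sqrt (2*Real.pi/(u*c))) := by
      linarith [h2]
  _ = (1/2) * Real.exp (-(3*r/2)) * Real.exp (-(u*c)) * Real.sqrt (2*Real.pi/(u*c)) := by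
      rw [Real.exp_neg (u*c), div_eq_mul_inv]; ring

set_option maxHeartbeats 1000000 in
theorem statement13 :
    ∀ C₀ : ℝ, 0 < C₀ → ∀ M : ℕ, 0 < M →
      ∃ C : ℝ, 0 < C ∧
        ∀ a x T : ℝ, 0 < a → 0 < x → 0 < T → T ≤ x / 3 →
          ∀ φ : ℝ → ℝ, IsAdmissible a x T C₀ M φ →
            ∀ r : ℝ, 1 ≤ r → r ≤ a / (8 * x) →
              |phiCheck φ r| ≤ C * r ^ (-(3:ℝ)/2) * Real.exp (-r / 2) := by
  intro C₀ hC₀ M hM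
  refine ⟨242, by norm_num, ?_⟩
  intro a x T ha hx hT hTx φ hφ r hr1 hr2
  obtain ⟨hsmooth, hbound, hone, hzero1, hzero2, hderiv, hpm1, hpm2⟩ := hφ
  have hc0 := cos34_pos
  have hclb := cos34_lb
  set c := Real.cos (3/4) with hcdef
  have hr0 : (0:ℝ) < r := lt_of_lt_of_le one_pos hr1
  have hxT : 0 < x - T := by linarith
  set L := a/(2*x+2*T) with hLdef
  set U := a/(x-T) with hUdef
  have hd1 : (0:ℝ) < 2*x+2*T := by linarith
  have hLpos : 0 < L := div_pos ha hd1
  have hUpos : 0 < U := div_pos ha hxT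
  have hr8 : r * (8*x) ≤ a := (le_div_iff₀ (by positivity : (0:ℝ) < 8*x)).1 hr2
  have h3r : 3*r ≤ L := by
    rw [hLdef, le_div_iff₀ hd1]
    nlinarith [mul_le_mul_of_nonneg_left hTx hr0.le]
  have hLU : L ≤ U :=
    div_le_div_of_nonneg_left ha.le hxT (by linarith)
  have hU4L : U ≤ 4*L := by
    have h4L : 4*L = (4*a)/(2*x+2*T) := by rw [hLdef]; ring
    rw [hUdef, h4L, div_le_div_iff₀ hxT hd1]
    nlinarith [mul_le_mul_of_nonneg_left hTx ha.le]
  set B := (1/2) * Real.exp (-(3*r/2)) * Real.exp (-(3*r*c)) * Real.sqrt (2*Real.pi/(3*r*c))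
    with hBdef
  have hB0 : 0 ≤ B := by positivity
  have hKle : ∀ u : ℝ, u ∈ Set.Icc L U → |KBessel (2*r) u| ≤ B := by
    intro u hu
    have hu0 : 0 < u := lt_of_lt_of_le hLpos hu.1
    have h3ru : 3*r ≤ u := le_trans h3r hu.1
    refine (kbessel_le u r hu0 hr0.le).trans ?_
    rw [hBdef]
    have e1 : Real.exp (-(u*c)) ≤ Real.exp (-(3*r*c)) := by
      apply Real.exp_le_exp.2
      nlinarith
    have e2 : Real.sqrt (2*Real.pi/(u*c)) ≤ Real.sqrt (2*Real.pi/(3*r*c)) := by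
      apply Real.sqrt_le_sqrt
      apply div_le_div_of_nonneg_left (by positivity) (by positivity)
      nlinarith
    have hpos1 : (0:ℝ) ≤ (1/2) * Real.exp (-(3*r/2)) := by positivity
    calc (1/2) * Real.exp (-(3*r/2)) * Real.exp (-(u*c)) * Real.sqrt (2*Real.pi/(u*c))
        ≤ (1/2) * Real.exp (-(3*r/2)) * Real.exp (-(3*r*c)) * Real.sqrt (2*Real.pi/(u*c)) := by
          apply mul_le_mul_of_nonneg_right (mul_le_mul_of_nonneg_left e1 hpos1) (Real.sqrt_nonneg _)
    _ ≤ (1/2) * Real.exp (-(3*r/2)) * Real.exp (-(3*r*c)) * Real.sqrt (2*Real.pi/(3*r*c)) := by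
          apply mul_le_mul_of_nonneg_left e2 (by positivity)
  have hmeas : MeasurableSet (Set.Icc L U) := measurableSet_Icc
  set g := (Set.Icc L U).indicator (fun _ : ℝ => B / L) with hgdef
  have hg_int : Integrable g := by
    rw [hgdef, integrable_indicator_iff hmeas]
    exact integrableOn_const measure_Icc_lt_top.ne
  have h_ae : ∀ᵐ u ∂(volume.restrict (Set.Ioi (0:ℝ))), ‖KBessel (2*r) u * φ u / u‖ ≤ g u := by
    rw [ae_restrict_iff' measurableSet_Ioi]
    refine ae_of_all _ fun u hu => ?_
    have hu0 : (0:ℝ) < u := hu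
    by_cases hmem : u ∈ Set.Icc L U
    · rw [hgdef, Set.indicator_of_mem hmem]
      have hphi : |φ u| ≤ 1 := abs_le.2 ⟨by linarith [(hbound u).1], (hbound u).2⟩
      calc ‖KBessel (2*r) u * φ u / u‖ = |KBessel (2*r) u| * |φ u| / u := by
            rw [Real.norm_eq_abs, abs_div, abs_mul, abs_of_pos hu0]
      _ ≤ B * 1 / L := by
            apply div_le_div₀ (by linarith) ?_ hLpos hmem.1
            exact mul_le_mul (hKle u hmem) hphi (abs_nonneg _) hB0
      _ = B / L := by ring
    · rw [hgdef, Set.indicator_of_notMem hmem]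
      have hphi0 : φ u = 0 := by
        rcases lt_or_ge u L with h|h
        · exact hzero1 u h.le
        · refine hzero2 u ?_
          by_contra hcon
          push_neg at hcon
          exact hmem ⟨h, hcon.le⟩
      simp [hphi0]
  have hle_int : |∫ u in Set.Ioi (0:ℝ), KBessel (2*r) u * φ u / u| ≤ ∫ u in Set.Ioi (0:ℝ), g u := by
    rw [← Real.norm_eq_abs]
    exact norm_integral_le_of_norm_le hg_int.restrict h_ae
  have hgval : (∫ u in Set.Ioi (0:ℝ), g u) ≤ 4*B := by
    have h1 : (∫ u in Set.Ioi (0:ℝ), g u) ≤ ∫ u : ℝ, g u := by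
      refine integral_mono_measure Measure.restrict_le_self ?_ hg_int
      refine ae_of_all _ fun u => ?_
      rw [hgdef]
      exact Set.indicator_nonneg (fun _ _ => by positivity) u
    have h2 : (∫ u : ℝ, g u) = (U - L) * (B / L) := by
      rw [hgdef, integral_indicator_const _ hmeas, Real.volume_real_Icc_of_le (by linarith),
        smul_eq_mul]
    have h3 : (U - L) * (B / L) ≤ 4*B := by
      rw [div_eq_mul_inv]
      have h5 : (U - L) * B ≤ (4*L) * B := mul_le_mul_of_nonneg_right (by linarith) hB0
      calc (U - L) * (B * L⁻¹) = ((U - L) * B) * L⁻¹ := by ring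
      _ ≤ ((4*L) * B) * L⁻¹ := mul_le_mul_of_nonneg_right h5 (by positivity)
      _ = 4*B := by field_simp
    linarith
  have hcosh : Real.cosh (Real.pi * r) ≤ Real.exp (Real.pi * r) := by
    rw [Real.cosh_eq]
    have h1 : Real.exp (-(Real.pi * r)) ≤ Real.exp (Real.pi * r) := by
      apply Real.exp_le_exp.2
      have := Real.pi_pos
      nlinarith
    linarith [Real.exp_pos (Real.pi * r)]
  have hsqrt3 : Real.sqrt 3 ≤ 7/4 := by
    rw [show (7/4:ℝ) = Real.sqrt ((7/4)^2) from (Real.sqrt_sq (by norm_num)).symm]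
    exact Real.sqrt_le_sqrt (by norm_num)
  have hsqrt : Real.sqrt (2*Real.pi/(3*r*c)) ≤ (7/4) / Real.sqrt r := by
    have h1 : 2*Real.pi/(3*r*c) ≤ 3/r := by
      rw [div_le_div_iff₀ (by positivity) hr0]
      have hp := Real.pi_lt_d2
      nlinarith [mul_le_mul_of_nonneg_left hclb (by positivity : (0:ℝ) ≤ 9*r),
        mul_lt_mul_of_pos_right hp hr0]
    calc Real.sqrt (2*Real.pi/(3*r*c)) ≤ Real.sqrt (3/r) := Real.sqrt_le_sqrt h1
    _ = Real.sqrt 3 / Real.sqrt r := Real.sqrt_div (by norm_num) r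
    _ ≤ (7/4) / Real.sqrt r := by gcongr
  have hexp1 : Real.exp (Real.pi*r) * (Real.exp (-(3*r/2)) * Real.exp (-(3*r*c)))
      = Real.exp ((Real.pi - 3/2 - 3*c)*r) := by
    rw [← Real.exp_add, ← Real.exp_add]
    ring_nf
  have hexpo : (Real.pi - 3/2 - 3*c) * r ≤ (-(1/2) - 1/69) * r := by
    apply mul_le_mul_of_nonneg_right ?_ hr0.le
    have := Real.pi_lt_d6
    nlinarith
  have hexp2 : Real.exp ((-(1/2) - 1/69)*r) = Real.exp (-r/2) * Real.exp (-(r/69)) := by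
    rw [← Real.exp_add]
    ring_nf
  have hexp3 : Real.exp (-(r/69)) ≤ 69/r := by
    rw [Real.exp_neg]
    have h4 : r/69 ≤ Real.exp (r/69) := by linarith [Real.add_one_le_exp (r/69)]
    calc (Real.exp (r/69))⁻¹ ≤ (r/69)⁻¹ := inv_anti₀ (by positivity) h4
    _ = 69/r := by rw [inv_div]
  have hrpow : r ^ (-(3:ℝ)/2) = 1/(Real.sqrt r * r) := by
    have hs0 : (0:ℝ) < Real.sqrt r := Real.sqrt_pos.2 hr0
    rw [show (-(3:ℝ)/2) = (-1) + (-(1/2)) by norm_num, Real.rpow_add hr0,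
      Real.rpow_neg_one, Real.rpow_neg hr0.le, ← Real.sqrt_eq_rpow, one_div, mul_inv]
    ring
  have hchain : |phiCheck φ r| ≤ (483/2) * (1/(Real.sqrt r * r)) * Real.exp (-r/2) := by
    have hs0 : (0:ℝ) < Real.sqrt r := Real.sqrt_pos.2 hr0
    calc |phiCheck φ r|
        = Real.cosh (Real.pi*r) * |∫ u in Set.Ioi (0:ℝ), KBessel (2*r) u * φ u / u| := by
          rw [phiCheck, abs_mul, abs_of_pos (Real.cosh_pos _)]
    _ ≤ Real.exp (Real.pi*r) * (4*B) :=
          mul_le_mul hcosh (hle_int.trans hgval) (abs_nonneg _) (Real.exp_pos _).le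
    _ = 2 * (Real.exp (Real.pi*r) * (Real.exp (-(3*r/2)) * Real.exp (-(3*r*c))))
          * Real.sqrt (2*Real.pi/(3*r*c)) := by rw [hBdef]; ring
    _ = 2 * Real.exp ((Real.pi - 3/2 - 3*c)*r) * Real.sqrt (2*Real.pi/(3*r*c)) := by
          rw [hexp1]
    _ ≤ 2 * (Real.exp (-r/2) * (69/r)) * ((7/4)/Real.sqrt r) := by
          apply mul_le_mul ?_ hsqrt (Real.sqrt_nonneg _) (by positivity)
          apply mul_le_mul_of_nonneg_left ?_ (by norm_num)
          calc Real.exp ((Real.pi-3/2-3*c)*r) ≤ Real.exp ((-(1/2)-1/69)*r) :=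
                Real.exp_le_exp.2 hexpo
          _ = Real.exp (-r/2) * Real.exp (-(r/69)) := hexp2
          _ ≤ Real.exp (-r/2) * (69/r) :=
                mul_le_mul_of_nonneg_left hexp3 (Real.exp_pos _).le
    _ = (483/2) * (1/(Real.sqrt r * r)) * Real.exp (-r/2) := by
          field_simp
          ring
  refine hchain.trans ?_
  rw [hrpow]
  have hs0 : (0:ℝ) < Real.sqrt r := Real.sqrt_pos.2 hr0
  have : (0:ℝ) ≤ 1/(Real.sqrt r * r) * Real.exp (-r/2) := by positivity
  nlinarith [this]
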